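/- Let v, w ∈ ℂⁿ be unit vectors. If for all r₁, r₂ ∈ ℝ one has conj(⟨w, H(r₁)⟩)·⟨w, H(r₂)⟩ = conj(⟨v, H(r₁)⟩)·⟨v, H(r₂)⟩, then there exists λ ∈ ℂ with |λ| = 1 such that w = λ·v. -/

import Mathlib

open MeasureTheory Filter Topology

noncomputable section

/-- The physicists' Hermite polynomial `H_m(y) = (−1)^m e^{y²} (d/dy)^m e^{−y²}`. -/
def hermiteH (m : ℕ) (y : ℝ) : ℝ :=
  (-1 : ℝ) ^ m * Real.exp (y ^ 2) * iteratedDeriv m (fun x => Real.exp (-x ^ 2)) y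

/-- The Hermite function `h_m(y) = (2^m m! √π)^{−1/2} H_m(y) e^{−y²/2}`. -/
def hermiteFun (m : ℕ) (y : ℝ) : ℝ :=
  (Real.sqrt (2 ^ m * m.factorial * Real.sqrt Real.pi))⁻¹ * hermiteH m y *
    Real.exp (-y ^ 2 / 2)

/-- `H(y) = (h_0(y), …, h_{n−1}(y))ᵀ`, viewed in `ℂⁿ`. -/
def HvecC (n : ℕ) (y : ℝ) : Fin n → ℂ := fun j => (hermiteFun j y : ℂ)

/-!
The kernel `(a, b) ↦ conj (f a) * f b` determines a function `f` up to a unimodular factor; apply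
this to `f r = ⟨w, H(r)⟩`. Since `h_m(y) = e^{-y²/2} p_m(y)` with `p_m` a polynomial of degree `m`,
the Hermite functions are linearly independent, so `⟨w, H(·)⟩` determines `w`.
-/

open Polynomial ComplexConjugate

theorem RCLike.exists_norm_eq_one_eq_smul_of_conj_mul_eq {X 𝕜 : Type*} [RCLike 𝕜] {f g : X → 𝕜}
    (h : ∀ a b, conj (f a) * f b = conj (g a) * g b) : ∃ μ : 𝕜, ‖μ‖ = 1 ∧ f = μ • g := by
  have hnorm : ∀ a, ‖f a‖ = ‖g a‖ := fun a => by
    have := congrArg norm (h a a)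
    rw [norm_mul, norm_mul, RCLike.norm_conj, RCLike.norm_conj] at this
    exact (mul_self_inj (norm_nonneg _) (norm_nonneg _)).mp this
  by_cases hf : ∃ a, f a ≠ 0
  · obtain ⟨a, ha⟩ := hf
    have hca : conj (f a) ≠ 0 := by simpa using ha
    refine ⟨conj (g a) / conj (f a), ?_, funext fun b => ?_⟩
    · rw [norm_div, RCLike.norm_conj, RCLike.norm_conj, hnorm a,
        div_self (by simpa [← hnorm a] using ha)]
    · rw [Pi.smul_apply, smul_eq_mul, div_mul_eq_mul_div, eq_div_iff hca, ← h a b, mul_comm]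
  · push Not at hf
    refine ⟨1, norm_one, funext fun a => ?_⟩
    have : g a = 0 := norm_eq_zero.mp (by rw [← hnorm a, hf a, norm_zero])
    simp [hf a, this]

lemma hermiteH_eq_aeval_hermite (m : ℕ) (y : ℝ) :
    hermiteH m y = √2 ^ m * aeval (√2 * y) (hermite m) := by
  have h2 : √2 ^ 2 = 2 := Real.sq_sqrt (by norm_num)
  have hgauss : ContDiff ℝ m (fun t : ℝ => Real.exp (-(t ^ 2 / 2))) := by fun_prop
  have hscale : (fun x : ℝ => Real.exp (-x ^ 2)) =
      fun x => (fun t : ℝ => Real.exp (-(t ^ 2 / 2))) (√2 * x) := by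
    funext x
    change _ = Real.exp (-((√2 * x) ^ 2 / 2))
    rw [mul_pow, h2]
    ring_nf
  have hiter : iteratedDeriv m (fun x : ℝ => Real.exp (-x ^ 2)) y
      = √2 ^ m * ((-1 : ℝ) ^ m * aeval (√2 * y) (hermite m) * Real.exp (-y ^ 2)) := by
    rw [hscale, iteratedDeriv_comp_const_mul hgauss]
    beta_reduce
    rw [iteratedDeriv_eq_iterate, deriv_gaussian_eq_hermite_mul_gaussian, mul_pow, h2]
    ring_nf
  have hsign : (-1 : ℝ) ^ m * (-1 : ℝ) ^ m = 1 := by rw [← mul_pow]; norm_num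
  have hexp : Real.exp (y ^ 2) * Real.exp (-y ^ 2) = 1 := by rw [← Real.exp_add]; simp
  rw [hermiteH, hiter]
  linear_combination (√2 ^ m * aeval (√2 * y) (hermite m)) *
    ((-1 : ℝ) ^ m * (-1 : ℝ) ^ m * hexp + hsign)

def hermiteFunConst (m : ℕ) : ℝ :=
  (Real.sqrt (2 ^ m * m.factorial * Real.sqrt Real.pi))⁻¹ * √2 ^ m

lemma hermiteFunConst_ne_zero (m : ℕ) : hermiteFunConst m ≠ 0 := by
  have : (0 : ℝ) < m.factorial := mod_cast m.factorial_pos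
  unfold hermiteFunConst
  positivity

lemma hermiteFun_eq_exp_mul_aeval (m : ℕ) (y : ℝ) :
    hermiteFun m y = Real.exp (-y ^ 2 / 2) * (hermiteFunConst m * aeval (√2 * y) (hermite m)) := by
  rw [hermiteFun, hermiteH_eq_aeval_hermite, hermiteFunConst]
  ring

/-- The polynomial `p_m` with `h_m(y) = e^{-y²/2} p_m(√2 y)`. -/
def hermiteFunPoly (m : ℕ) : ℂ[X] :=
  C (hermiteFunConst m : ℂ) * (hermite m).map (algebraMap ℤ ℂ)

lemma degree_hermiteFunPoly (m : ℕ) : (hermiteFunPoly m).degree = m := by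
  rw [hermiteFunPoly, degree_C_mul (mod_cast hermiteFunConst_ne_zero m),
    (hermite_monic m).degree_map, degree_hermite]

def hermiteFunPolySeq : Polynomial.Sequence ℂ where
  elems' := hermiteFunPoly
  degree_eq' := degree_hermiteFunPoly

def gaussianScaledEval : ℂ[X] →ₗ[ℂ] (ℝ → ℂ) :=
  LinearMap.pi fun y => (Real.exp (-y ^ 2 / 2) : ℂ) • leval ((√2 * y : ℝ) : ℂ)

lemma gaussianScaledEval_apply (p : ℂ[X]) (y : ℝ) :
    gaussianScaledEval p y = Real.exp (-y ^ 2 / 2) * p.eval ((√2 * y : ℝ) : ℂ) := rfl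

lemma ker_gaussianScaledEval : LinearMap.ker gaussianScaledEval = ⊥ := by
  refine LinearMap.ker_eq_bot'.mpr fun p hp => eq_zero_of_infinite_isRoot p ?_
  have hroot : ∀ x : ℝ, p.IsRoot (x : ℂ) := fun x => by
    have hx := congrFun hp (x / √2)
    rw [gaussianScaledEval_apply, mul_div_cancel₀ x (by positivity)] at hx
    exact (mul_eq_zero.mp hx).resolve_left (mod_cast (Real.exp_pos _).ne')
  exact (Set.infinite_range_of_injective Complex.ofReal_injective).mono
    (Set.range_subset_iff.mpr hroot)

lemma gaussianScaledEval_hermiteFunPoly (m : ℕ) :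
    gaussianScaledEval (hermiteFunPoly m) = fun y => (hermiteFun m y : ℂ) := by
  funext y
  rw [gaussianScaledEval_apply, hermiteFun_eq_exp_mul_aeval, hermiteFunPoly, eval_mul, eval_C,
    eval_map_algebraMap]
  simp only [← Complex.coe_algebraMap]
  rw [aeval_algebraMap_apply, ← map_mul, ← map_mul]

theorem linearIndependent_hermiteFun :
    LinearIndependent ℂ fun m y => (hermiteFun m y : ℂ) := by
  have h := hermiteFunPolySeq.linearIndependent.map' _ ker_gaussianScaledEval
  rwa [show gaussianScaledEval ∘ hermiteFunPolySeq = fun m y => (hermiteFun m y : ℂ) from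
    funext gaussianScaledEval_hermiteFunPoly] at h

lemma eq_of_forall_dotProduct_HvecC_eq {n : ℕ} {c d : Fin n → ℂ}
    (h : ∀ r, c ⬝ᵥ HvecC n r = d ⬝ᵥ HvecC n r) : c = d :=
  funext <| Fintype.linearIndependent_iffₛ.mp
    (linearIndependent_hermiteFun.comp _ Fin.val_injective) c d
    (funext fun r => by simpa [dotProduct, HvecC] using h r)

theorem separation_same_fiber_general (n : ℕ) (v w : Fin n → ℂ)
    (h : ∀ r₁ r₂ : ℝ,
      (starRingEnd ℂ) (dotProduct (star w) (HvecC n r₁)) *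
          dotProduct (star w) (HvecC n r₂) =
        (starRingEnd ℂ) (dotProduct (star v) (HvecC n r₁)) *
          dotProduct (star v) (HvecC n r₂)) :
    ∃ lam : ℂ, ‖lam‖ = 1 ∧ w = lam • v := by
  obtain ⟨μ, hμ, hwv⟩ := RCLike.exists_norm_eq_one_eq_smul_of_conj_mul_eq h
  have hstar : star w = μ • star v := eq_of_forall_dotProduct_HvecC_eq fun r => by
    rw [smul_dotProduct]
    exact congrFun hwv r
  refine ⟨conj μ, by rwa [RCLike.norm_conj], ?_⟩
  rw [← star_star w, hstar, star_smul, star_star]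
  rfl

/-- If `v, w` are unit vectors in `ℂⁿ` such that
`conj(⟨w, H(r₁)⟩)·⟨w, H(r₂)⟩ = conj(⟨v, H(r₁)⟩)·⟨v, H(r₂)⟩` for all `r₁, r₂ ∈ ℝ`,
then `w = λ·v` for some unimodular `λ ∈ ℂ`. -/
theorem separation_same_fiber (n : ℕ) (hn : 1 ≤ n) (v w : Fin n → ℂ)
    (hv : dotProduct (star v) v = 1) (hw : dotProduct (star w) w = 1)
    (h : ∀ r₁ r₂ : ℝ,
      (starRingEnd ℂ) (dotProduct (star w) (HvecC n r₁)) *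
          dotProduct (star w) (HvecC n r₂) =
        (starRingEnd ℂ) (dotProduct (star v) (HvecC n r₁)) *
          dotProduct (star v) (HvecC n r₂)) :
    ∃ lam : ℂ, ‖lam‖ = 1 ∧ w = lam • v :=
  separation_same_fiber_general n v w h
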